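/- Let p be a full-support prior on {x_1,…,x_N}, let ε ≥ 0, and let P be an N×M privacy mechanism satisfying ε-PML with respect to p. Fix distinct columns u ≠ v and define Q from P by replacing column v with the entrywise sum of columns u and v (Q(i,v) = P(i,u) + P(i,v)) and replacing column u with the all-zero column, leaving all other columns unchanged. Then Q is a valid privacy mechanism satisfying ε-PML, and for every sublinear μ : [0,∞)^N → [0,∞) the sub-convex utility satisfies U(Q) ≤ U(P). -/

import Mathlib

open scoped BigOperators Classical

noncomputable section

/-- The output distribution `P_Y(j) = ∑ i, p i * P i j` induced by a prior `p`
and a mechanism `P`. -/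
def outDist {N M : ℕ} (p : Fin N → ℝ) (P : Matrix (Fin N) (Fin M) ℝ) (j : Fin M) : ℝ :=
  ∑ i, p i * P i j

/-- A privacy mechanism: nonnegative entries, rows summing to one. -/
def IsMechanism {N M : ℕ} (P : Matrix (Fin N) (Fin M) ℝ) : Prop :=
  (∀ i j, 0 ≤ P i j) ∧ ∀ i, ∑ j, P i j = 1

/-- Pointwise maximal leakage to output `j`:
`ℓ(X → y_j) = log((max_i P i j) / P_Y(j))`. -/
def pml {N M : ℕ} (p : Fin N → ℝ) (P : Matrix (Fin N) (Fin M) ℝ) (j : Fin M) : ℝ :=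
  Real.log ((⨆ i, P i j) / outDist p P j)

/-- `P` satisfies `ε`-PML (w.r.t. prior `p`): the leakage of every output of
positive probability is at most `ε`. -/
def SatisfiesPML {N M : ℕ} (p : Fin N → ℝ) (ε : ℝ) (P : Matrix (Fin N) (Fin M) ℝ) : Prop :=
  ∀ j, 0 < outDist p P j → pml p P j ≤ ε

/-- A sublinear function `μ : [0,∞)^N → [0,∞)`: nonnegative, positively
homogeneous and subadditive on the nonnegative orthant. -/
def Sublinear {N : ℕ} (μ : (Fin N → ℝ) → ℝ) : Prop :=
  (∀ x, (∀ i, 0 ≤ x i) → 0 ≤ μ x) ∧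
  (∀ (c : ℝ), 0 ≤ c → ∀ x, (∀ i, 0 ≤ x i) → μ (c • x) = c * μ x) ∧
  (∀ x y, (∀ i, 0 ≤ x i) → (∀ i, 0 ≤ y i) → μ (x + y) ≤ μ x + μ y)

/-- The sub-convex utility associated with `μ`: `U(P) = ∑ j, μ(P_j)` where
`P_j` is the `j`-th column of `P`. -/
def utility {N M : ℕ} (μ : (Fin N → ℝ) → ℝ) (P : Matrix (Fin N) (Fin M) ℝ) : ℝ :=
  ∑ j, μ (fun i => P i j)

end

/-!
Relative to a full-support prior, `ε`-PML is the column-wise condition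
`max_i P(i,j) ≤ exp ε · P_Y(j)`: a column of zero output probability vanishes, so it satisfies
the condition trivially. In a column the maximum is subadditive and `P_Y` is additive, so the
sum of two admissible columns is admissible. Subadditivity of `μ` bounds the utility of the merged
column by that of the two columns it replaces, and the emptied column contributes `μ 0 = 0`.
-/

open Finset Real Matrix

section MergeAt

variable {ι V : Type*} [DecidableEq ι]

def mergeAt [AddCommMonoid V] (c : ι → V) (u v : ι) : ι → V :=
  fun j => if j = v then c u + c v else if j = u then 0 else c j

variable [AddCommMonoid V] {u v : ι}

@[simp]
lemma mergeAt_right (c : ι → V) : mergeAt c u v v = c u + c v := if_pos rfl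

@[simp]
lemma mergeAt_left (c : ι → V) (huv : u ≠ v) : mergeAt c u v u = 0 := by
  simp [mergeAt, huv]

lemma mergeAt_of_ne (c : ι → V) {j : ι} (hju : j ≠ u) (hjv : j ≠ v) : mergeAt c u v j = c j := by
  simp [mergeAt, hju, hjv]

lemma mergeAt_apply_apply {κ : Type*} (c : ι → κ → V) (j : ι) (k : κ) :
    mergeAt c u v j k = mergeAt (fun j => c j k) u v j := by
  unfold mergeAt
  split_ifs <;> rfl

lemma mergeAt_smul {R : Type*} [Monoid R] [DistribMulAction R V] (r : R) (c : ι → V) :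
    mergeAt (r • c) u v = r • mergeAt c u v := by
  funext j
  simp only [mergeAt, Pi.smul_apply, smul_ite, smul_add, smul_zero]

lemma mergeAt_mono [Preorder V] [IsOrderedAddMonoid V] {c d : ι → V} (h : c ≤ d) :
    mergeAt c u v ≤ mergeAt d u v := by
  intro j
  unfold mergeAt
  split_ifs
  exacts [add_le_add (h u) (h v), le_rfl, h j]

lemma mergeAt_nonneg [Preorder V] [IsOrderedAddMonoid V] {c : ι → V} (h : ∀ j, 0 ≤ c j) :
    ∀ j, 0 ≤ mergeAt c u v j := by
  intro j
  unfold mergeAt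
  split_ifs
  exacts [add_nonneg (h u) (h v), le_rfl, h j]

lemma sum_comp_mergeAt [Fintype ι] {β : Type*} [AddCommGroup β] (g : V → β) (c : ι → V)
    (huv : u ≠ v) :
    ∑ j, g (mergeAt c u v j) =
      ∑ j, g (c j) - g (c u) - g (c v) + g (c u + c v) + g 0 := by
  have hdiff : ∑ j, (g (mergeAt c u v j) - g (c j)) =
      (g 0 - g (c u)) + (g (c u + c v) - g (c v)) := by
    rw [Fintype.sum_eq_add u v huv fun j ⟨hju, hjv⟩ => by rw [mergeAt_of_ne c hju hjv, sub_self],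
      mergeAt_left c huv, mergeAt_right]
  rw [sum_sub_distrib] at hdiff
  rw [sub_eq_iff_eq_add.mp hdiff]
  abel

end MergeAt

variable {N M : ℕ}

def mergeCols (P : Matrix (Fin N) (Fin M) ℝ) (u v : Fin M) : Matrix (Fin N) (Fin M) ℝ :=
  Matrix.of fun i => mergeAt (P i) u v

lemma mergeCols_transpose (P : Matrix (Fin N) (Fin M) ℝ) (u v : Fin M) :
    (mergeCols P u v)ᵀ = mergeAt Pᵀ u v := by
  funext j i
  exact (mergeAt_apply_apply Pᵀ j i).symm

lemma isMechanism_mergeCols {P : Matrix (Fin N) (Fin M) ℝ} (hP : IsMechanism P) {u v : Fin M}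
    (huv : u ≠ v) : IsMechanism (mergeCols P u v) := by
  refine ⟨fun i => mergeAt_nonneg (hP.1 i), fun i => ?_⟩
  change ∑ j, mergeAt (P i) u v j = 1
  simpa [hP.2 i] using sum_comp_mergeAt id (P i) huv

lemma outDist_mergeCols (p : Fin N → ℝ) (P : Matrix (Fin N) (Fin M) ℝ) (u v : Fin M) :
    outDist p (mergeCols P u v) = mergeAt (outDist p P) u v := by
  funext j
  simp only [outDist, mergeCols, of_apply, mergeAt]
  split_ifs <;> simp [mul_add, sum_add_distrib]

lemma iSup_add_le_of_nonneg {κ : Type*} [Finite κ] {f g : κ → ℝ} (hf : 0 ≤ f) (hg : 0 ≤ g) :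
    ⨆ k, (f k + g k) ≤ (⨆ k, f k) + ⨆ k, g k :=
  Real.iSup_le (fun k => add_le_add (le_ciSup (Finite.bddAbove_range f) k)
    (le_ciSup (Finite.bddAbove_range g) k)) (add_nonneg (Real.iSup_nonneg hf) (Real.iSup_nonneg hg))

lemma iSup_mergeCols_le {P : Matrix (Fin N) (Fin M) ℝ} (hP : ∀ i j, 0 ≤ P i j) (u v j : Fin M) :
    ⨆ i, mergeCols P u v i j ≤ mergeAt (fun j => ⨆ i, P i j) u v j := by
  simp only [mergeCols, of_apply, mergeAt]
  split_ifs
  · exact iSup_add_le_of_nonneg (fun i => hP i u) (fun i => hP i v)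
  · simp
  · exact le_rfl

lemma pml_le_iff {p : Fin N → ℝ} {P : Matrix (Fin N) (Fin M) ℝ} {ε : ℝ} {j : Fin M}
    (hP : ∀ i, 0 ≤ P i j) (hpos : 0 < outDist p P j) :
    pml p P j ≤ ε ↔ ⨆ i, P i j ≤ exp ε * outDist p P j := by
  have hsup : 0 < ⨆ i, P i j := by
    obtain ⟨i, -, hi⟩ := exists_lt_of_sum_lt (show ∑ i, (0 : ℝ) < ∑ i, p i * P i j by simpa)
    exact ((hP i).lt_of_ne (right_ne_zero_of_mul hi.ne').symm).trans_le
      (le_ciSup (Finite.bddAbove_range fun i => P i j) i)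
  rw [pml, log_le_iff_le_exp (div_pos hsup hpos), div_le_iff₀ hpos, mul_comm]

lemma eq_zero_of_outDist_eq_zero {p : Fin N → ℝ} (hp : ∀ i, 0 < p i)
    {P : Matrix (Fin N) (Fin M) ℝ} {j : Fin M} (hP : ∀ i, 0 ≤ P i j) (h : outDist p P j = 0)
    (i : Fin N) : P i j = 0 := by
  have := (sum_eq_zero_iff_of_nonneg fun i _ => mul_nonneg (hp i).le (hP i)).1 h i (mem_univ i)
  exact (mul_eq_zero.1 this).resolve_left (hp i).ne'

lemma satisfiesPML_iff {p : Fin N → ℝ} (hp : ∀ i, 0 < p i) {ε : ℝ}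
    {P : Matrix (Fin N) (Fin M) ℝ} (hP : ∀ i j, 0 ≤ P i j) :
    SatisfiesPML p ε P ↔ ∀ j, ⨆ i, P i j ≤ exp ε * outDist p P j := by
  refine ⟨fun h j => ?_, fun h j hpos => (pml_le_iff (hP · j) hpos).2 (h j)⟩
  rcases (sum_nonneg fun i _ => mul_nonneg (hp i).le (hP i j)).eq_or_lt with h0 | hpos
  · rw [outDist, ← h0, mul_zero]
    exact Real.iSup_le (fun i => (eq_zero_of_outDist_eq_zero hp (hP · j) h0.symm i).le) le_rfl
  · exact (pml_le_iff (hP · j) hpos).1 (h j hpos)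

lemma satisfiesPML_mergeCols {p : Fin N → ℝ} (hp : ∀ i, 0 < p i) {ε : ℝ}
    {P : Matrix (Fin N) (Fin M) ℝ} (hmech : IsMechanism P) (hpml : SatisfiesPML p ε P)
    {u v : Fin M} (huv : u ≠ v) : SatisfiesPML p ε (mergeCols P u v) := by
  have hsup := (satisfiesPML_iff hp hmech.1).1 hpml
  refine (satisfiesPML_iff hp (isMechanism_mergeCols hmech huv).1).2 fun j => ?_
  calc ⨆ i, mergeCols P u v i j ≤ mergeAt (fun j => ⨆ i, P i j) u v j :=
        iSup_mergeCols_le hmech.1 u v j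
    _ ≤ mergeAt (exp ε • outDist p P) u v j := mergeAt_mono hsup j
    _ = exp ε * outDist p (mergeCols P u v) j := by rw [mergeAt_smul, outDist_mergeCols]; rfl

lemma Sublinear.map_zero {μ : (Fin N → ℝ) → ℝ} (hμ : Sublinear μ) : μ 0 = 0 := by
  simpa using hμ.2.1 0 le_rfl 0 fun _ => le_rfl

lemma utility_mergeCols_le {μ : (Fin N → ℝ) → ℝ} (hμ : Sublinear μ)
    {P : Matrix (Fin N) (Fin M) ℝ} (hP : ∀ i j, 0 ≤ P i j) {u v : Fin M} (huv : u ≠ v) :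
    utility μ (mergeCols P u v) ≤ utility μ P := by
  have hsub := hμ.2.2 (Pᵀ u) (Pᵀ v) (fun i => hP i u) (fun i => hP i v)
  change ∑ j, μ ((mergeCols P u v)ᵀ j) ≤ ∑ j, μ (Pᵀ j)
  rw [mergeCols_transpose, sum_comp_mergeAt μ Pᵀ huv, hμ.map_zero]
  linarith

theorem merge_columns_general (N M : ℕ) (p : Fin N → ℝ)
    (hp : ∀ i, 0 < p i)
    (ε : ℝ)
    (P : Matrix (Fin N) (Fin M) ℝ)
    (hmech : IsMechanism P) (hpml : SatisfiesPML p ε P)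
    (u v : Fin M) (huv : u ≠ v) :
    IsMechanism (Matrix.of fun i j =>
      if j = v then P i u + P i v else if j = u then 0 else P i j) ∧
    SatisfiesPML p ε (Matrix.of fun i j =>
      if j = v then P i u + P i v else if j = u then 0 else P i j) ∧
    ∀ μ : (Fin N → ℝ) → ℝ, Sublinear μ →
      utility μ (Matrix.of fun i j =>
          if j = v then P i u + P i v else if j = u then 0 else P i j)
        ≤ utility μ P :=
  ⟨isMechanism_mergeCols hmech huv, satisfiesPML_mergeCols hp hmech hpml huv,
    fun _ hμ => utility_mergeCols_le hμ hmech.1 huv⟩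

/-- **Merging two columns.** Merging columns `u ≠ v` of an
`ε`-PML mechanism `P` (adding column `u` onto column `v` and zeroing column
`u`) yields a valid `ε`-PML mechanism whose sub-convex utility does not
exceed that of `P`. -/
theorem merge_columns (N M : ℕ) (p : Fin N → ℝ)
    (hp : ∀ i, 0 < p i) (hpsum : ∑ i, p i = 1)
    (ε : ℝ) (hε : 0 ≤ ε)
    (P : Matrix (Fin N) (Fin M) ℝ)
    (hmech : IsMechanism P) (hpml : SatisfiesPML p ε P)
    (u v : Fin M) (huv : u ≠ v) :
    IsMechanism (Matrix.of fun i j =>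
      if j = v then P i u + P i v else if j = u then 0 else P i j) ∧
    SatisfiesPML p ε (Matrix.of fun i j =>
      if j = v then P i u + P i v else if j = u then 0 else P i j) ∧
    ∀ μ : (Fin N → ℝ) → ℝ, Sublinear μ →
      utility μ (Matrix.of fun i j =>
          if j = v then P i u + P i v else if j = u then 0 else P i j)
        ≤ utility μ P :=
  merge_columns_general N M p hp ε P hmech hpml u v huv
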